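/- For the two-particle triangle-graph Hamiltonian H(v) = 4I + [[v₁+v₂, -1, 1], [-1, v₁+v₃, -1], [1, -1, v₂+v₃]] with v = (0, -t, 0) and t > 0, the vector Ψ_A = (1/√2)(1, 0, -1) is a non-degenerate ground state with eigenvalue 3 - t, for every t > 0. Hence the potentials (0,-t,0) for all t > 0 share the ground state Ψ_A (and thus the ground-state density (1/2, 1, 1/2)), violating the Hohenberg–Kohn uniqueness. -/

import Mathlib

/-!
Shifting by the claimed ground-state energy, the quadratic form of the Hamiltonian splits as a sum of
squares: `x ⬝ᵥ H x = (3 - t) ‖x‖² + (x₀ - x₁ + x₂)² + t x₁²`. Hence every eigenvalue is at least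
`3 - t`, and for `t > 0` the value `3 - t` is attained exactly on `x₁ = 0, x₀ + x₂ = 0`, the line
spanned by `Ψ_A`.
-/

open Matrix

section RayleighBound

variable {n R : Type*} [Fintype n] [CommRing R] [LinearOrder R] [IsStrictOrderedRing R]

theorem dotProduct_self_pos {x : n → R} (hx : x ≠ 0) : 0 < x ⬝ᵥ x :=
  lt_of_le_of_ne (Finset.sum_nonneg fun i _ => mul_self_nonneg (x i))
    (Ne.symm (dotProduct_self_eq_zero.not.mpr hx))

theorem le_eigenvalue_of_forall_le_dotProduct_mulVec {H : Matrix n n R} {E μ : R} {x : n → R}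
    (hE : ∀ y, E * (y ⬝ᵥ y) ≤ y ⬝ᵥ H *ᵥ y) (hx : x ≠ 0) (hμ : H *ᵥ x = μ • x) : E ≤ μ := by
  have h := hE x
  rw [hμ, dotProduct_smul, smul_eq_mul] at h
  exact le_of_mul_le_mul_right h (dotProduct_self_pos hx)

end RayleighBound

/-- The two-fermion Hamiltonian of the triangle graph with potential `(0, -t, 0)`. -/
def triangleHamiltonian (t : ℝ) : Matrix (Fin 3) (Fin 3) ℝ :=
  Matrix.of ![![4 - t, -1, 1], ![-1, 4, -1], ![1, -1, 4 - t]]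

theorem dotProduct_triangleHamiltonian_mulVec (t : ℝ) (x : Fin 3 → ℝ) :
    x ⬝ᵥ triangleHamiltonian t *ᵥ x =
      (3 - t) * (x ⬝ᵥ x) + (x 0 - x 1 + x 2) ^ 2 + t * x 1 ^ 2 := by
  simp [triangleHamiltonian, mulVec, dotProduct, Fin.sum_univ_three]
  ring

theorem triangleHamiltonian_mulVec_antisymm (t : ℝ) :
    triangleHamiltonian t *ᵥ ![1, 0, -1] = (3 - t) • ![1, 0, -1] := by
  ext i
  fin_cases i <;> simp [triangleHamiltonian, mulVec, dotProduct, Fin.sum_univ_three] <;> ring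

theorem le_eigenvalue_triangleHamiltonian {t μ : ℝ} (ht : 0 ≤ t) {x : Fin 3 → ℝ} (hx : x ≠ 0)
    (hμ : triangleHamiltonian t *ᵥ x = μ • x) : 3 - t ≤ μ := by
  refine le_eigenvalue_of_forall_le_dotProduct_mulVec (fun y => ?_) hx hμ
  rw [dotProduct_triangleHamiltonian_mulVec]
  nlinarith [sq_nonneg (y 0 - y 1 + y 2), sq_nonneg (y 1)]

theorem eq_smul_of_triangleHamiltonian_mulVec {t : ℝ} (ht : 0 < t) {x : Fin 3 → ℝ}
    (hx : triangleHamiltonian t *ᵥ x = (3 - t) • x) : x = x 0 • ![1, 0, -1] := by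
  have hform := dotProduct_triangleHamiltonian_mulVec t x
  rw [hx, dotProduct_smul, smul_eq_mul] at hform
  obtain ⟨hsum, hmid⟩ := (add_eq_zero_iff_of_nonneg (sq_nonneg _) (by positivity)).mp
    (by linarith : (x 0 - x 1 + x 2) ^ 2 + t * x 1 ^ 2 = 0)
  have h1 : x 1 = 0 := by simpa [ht.ne'] using hmid
  have h2 : x 2 = -x 0 := by simp only [h1, sub_zero, sq_eq_zero_iff] at hsum; linarith
  ext i
  fin_cases i <;> simp [h1, h2]

theorem triangle_HK_violation (t : ℝ) (ht : 0 < t)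
    (H : Matrix (Fin 3) (Fin 3) ℝ)
    (hH : H = Matrix.of ![![4 - t, -1, 1], ![-1, 4, -1], ![1, -1, 4 - t]])
    (Ψ : Fin 3 → ℝ)
    (hΨ : Ψ = fun i => (1 / Real.sqrt 2) * ![1, 0, -1] i) :
    H.mulVec Ψ = (3 - t) • Ψ ∧
    (∀ (μ : ℝ) (x : Fin 3 → ℝ), x ≠ 0 → H.mulVec x = μ • x → μ ≠ 3 - t → 3 - t < μ) ∧
    (∀ x : Fin 3 → ℝ, H.mulVec x = (3 - t) • x → ∃ c : ℝ, x = c • Ψ) ∧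
    (Ψ 0 ^ 2 + Ψ 1 ^ 2 = 1 / 2 ∧ Ψ 0 ^ 2 + Ψ 2 ^ 2 = 1 ∧ Ψ 1 ^ 2 + Ψ 2 ^ 2 = 1 / 2) := by
  change H = triangleHamiltonian t at hH
  have hΨ' : Ψ = (1 / Real.sqrt 2) • ![1, 0, -1] := hΨ
  subst hH
  refine ⟨?_, ?_, ?_, ?_⟩
  · rw [hΨ', mulVec_smul, triangleHamiltonian_mulVec_antisymm, smul_comm]
  · intro μ x hx hμ hne
    exact lt_of_le_of_ne (le_eigenvalue_triangleHamiltonian ht.le hx hμ) hne.symm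
  · intro x hx
    refine ⟨x 0 * Real.sqrt 2, ?_⟩
    rw [hΨ', smul_smul, show x 0 * Real.sqrt 2 * (1 / Real.sqrt 2) = x 0 by field_simp]
    exact eq_smul_of_triangleHamiltonian_mulVec ht hx
  · subst hΨ
    norm_num [cons_val_two]
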